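/- Let N be even and consider the N-qubit states |ψ_k⟩ := (|0^{N−k}1^k⟩ + |1^{N−k}0^k⟩)/√2 for k = 0,…,N/2−1, and ρ_N := (2/N) Σ_{k=0}^{N/2−1} |ψ_k⟩⟨ψ_k|. With Z := Σ_{i=1}^N σ^z_i, the quantum Fisher information satisfies F(ρ_N, Z) = (4/3)(N+1)(N+2). -/

import Mathlib

/-
For a state with `ρ A ρ = 0`, every pair of eigenvectors on which `A` has a non-zero matrix
element has an eigenvalue `0` in it, and for such pairs `(λ_a - λ_b)² / (λ_a + λ_b) = λ_a + λ_b`.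
Summing over the eigenbasis then gives `F(ρ, A) = 4 Tr(ρ A²)`.

For `ρ_N` this applies with `A = Z`: the two branches of `ψ_k` have `Z`-eigenvalues `N - 2k`
and `2k - N`, and the supports of `ψ_j`, `ψ_k` are disjoint for `j ≠ k`, so `⟨ψ_j|Z|ψ_k⟩ = 0`.
Hence `F = 4 (2/N) Σ_k (N - 2k)² = (4/3)(N+1)(N+2)`.
-/

open Matrix Finset

/-- Quantum Fisher information via a spectral decomposition of `ρ`. -/
noncomputable def qfi {ι : Type*} [Fintype ι] (lam : ι → ℝ) (v : ι → ι → ℂ)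
    (A : Matrix ι ι ℂ) : ℝ :=
  2 * ∑ a : ι, ∑ b : ι,
    if 0 < lam a + lam b then
      (lam a - lam b) ^ 2 / (lam a + lam b) * Complex.normSq (star (v a) ⬝ᵥ (A *ᵥ v b))
    else 0

/-- `Z = ∑_i σ^z_i` as a diagonal matrix on the computational basis of `N` qubits. -/
noncomputable def pauliZTotal (N : ℕ) : Matrix (Fin N → Fin 2) (Fin N → Fin 2) ℂ :=
  Matrix.diagonal fun s => ∑ i : Fin N, if s i = 0 then (1 : ℂ) else -1

/-- The basis string `0^{N-k}1^k` (last `k` qubits equal to 1). -/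
def baseStr (N k : ℕ) : Fin N → Fin 2 := fun i => if N - k ≤ (i : ℕ) then 1 else 0

/-- The basis string `1^{N-k}0^k`. -/
def flipStr (N k : ℕ) : Fin N → Fin 2 := fun i => if N - k ≤ (i : ℕ) then 0 else 1

/-- `|ψ_k⟩ = (|0^{N-k}1^k⟩ + |1^{N-k}0^k⟩)/√2`. -/
noncomputable def psiK (N k : ℕ) : (Fin N → Fin 2) → ℂ := fun s =>
  ((if s = baseStr N k then 1 else 0) + (if s = flipStr N k then 1 else 0)) /
    (Real.sqrt 2 : ℂ)

/-- `ρ_N = (2/N) ∑_{k=0}^{N/2-1} |ψ_k⟩⟨ψ_k|`. -/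
noncomputable def rhoN (N : ℕ) : Matrix (Fin N → Fin 2) (Fin N → Fin 2) ℂ :=
  ∑ k ∈ Finset.range (N / 2),
    ((2 / (N : ℝ) : ℝ) : ℂ) • Matrix.vecMulVec (psiK N k) (star (psiK N k))

lemma ite_pos_sq_sub_div_add_mul_eq {x y z : ℝ} (hx : 0 ≤ x) (hy : 0 ≤ y) (hxyz : x * y * z = 0) :
    (if 0 < x + y then (x - y) ^ 2 / (x + y) * z else 0) = (x + y) * z := by
  split_ifs with h
  · -- `(x - y)² = (x + y)² - 4xy`, and the correction term carries the factor `xyz = 0`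
    field_simp
    linear_combination (-4) * hxyz
  · obtain rfl : x = 0 := by linarith
    obtain rfl : y = 0 := by linarith
    simp

section Eigenbasis

variable {ι : Type*} [Fintype ι]

lemma Matrix.IsHermitian.re_mul_self_apply {B : Matrix ι ι ℂ} (hB : B.IsHermitian) (a : ι) :
    ((B * B) a a).re = ∑ b, Complex.normSq (B a b) := by
  rw [mul_apply, Complex.re_sum]
  refine Finset.sum_congr rfl fun b _ => ?_
  rw [← hB.apply b a, RCLike.star_def, Complex.mul_conj, Complex.ofReal_re]

lemma star_dotProduct_mulVec_eq_apply (v : ι → ι → ℂ) (A : Matrix ι ι ℂ) (a b : ι) :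
    star (v a) ⬝ᵥ (A *ᵥ v b) = ((of v)ᵀᴴ * A * (of v)ᵀ) a b := by
  simp only [mul_apply, dotProduct, mulVec, conjTranspose_apply, transpose_apply, of_apply,
    Pi.star_apply, Finset.mul_sum, Finset.sum_mul]
  rw [Finset.sum_comm]
  simp only [mul_assoc]

variable [DecidableEq ι]

lemma sum_ite_pos_eq_two_mul_re_trace {lam : ι → ℝ} {B : Matrix ι ι ℂ} (hlam : ∀ a, 0 ≤ lam a)
    (hB : B.IsHermitian) (hBlam : ∀ a b, lam a * lam b * Complex.normSq (B a b) = 0) :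
    ∑ a, ∑ b, (if 0 < lam a + lam b then
      (lam a - lam b) ^ 2 / (lam a + lam b) * Complex.normSq (B a b) else 0) =
      2 * (diagonal (fun a => (lam a : ℂ)) * (B * B)).trace.re := by
  have hsymm : ∀ a b, Complex.normSq (B b a) = Complex.normSq (B a b) := fun a b => by
    rw [← hB.apply a b, RCLike.star_def, Complex.normSq_conj]
  simp only [ite_pos_sq_sub_div_add_mul_eq (hlam _) (hlam _) (hBlam _ _), add_mul,
    Finset.sum_add_distrib]
  rw [Finset.sum_comm (f := fun a b => lam b * _)]
  simp only [hsymm, trace, diag_apply, diagonal_mul, Complex.re_sum, Complex.re_ofReal_mul,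
    hB.re_mul_self_apply, Finset.mul_sum, two_mul, Finset.sum_add_distrib]

lemma conjTranspose_mul_self_eq_one_of_orthonormal {v : ι → ι → ℂ}
    (hortho : ∀ a b, star (v a) ⬝ᵥ v b = if a = b then (1 : ℂ) else 0) :
    (of v)ᵀᴴ * (of v)ᵀ = 1 := by
  ext a b
  have h := star_dotProduct_mulVec_eq_apply v 1 a b
  rw [one_mulVec, Matrix.mul_one] at h
  rw [← h, hortho, one_apply]

lemma sum_smul_vecMulVec_eq_mul_diagonal_mul (lam : ι → ℝ) (v : ι → ι → ℂ) :
    ∑ a, (lam a : ℂ) • vecMulVec (v a) (star (v a)) =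
      (of v)ᵀ * diagonal (fun a => (lam a : ℂ)) * (of v)ᵀᴴ := by
  ext s t
  simp [mul_apply, vecMulVec_apply, Matrix.sum_apply, diagonal, mul_assoc, mul_left_comm]

theorem qfi_eq_four_mul_re_trace_of_mul_mul_eq_zero {lam : ι → ℝ} {v : ι → ι → ℂ}
    (hortho : ∀ a b, star (v a) ⬝ᵥ v b = if a = b then (1 : ℂ) else 0)
    (hlam : ∀ a, 0 ≤ lam a) {ρ A : Matrix ι ι ℂ}
    (hdec : ρ = ∑ a, (lam a : ℂ) • vecMulVec (v a) (star (v a)))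
    (hA : A.IsHermitian) (hρAρ : ρ * A * ρ = 0) :
    qfi lam v A = 4 * (ρ * (A * A)).trace.re := by
  -- the columns of `W` are the eigenvectors, so `W` is unitary and `ρ = W D Wᴴ`
  rw [sum_smul_vecMulVec_eq_mul_diagonal_mul] at hdec
  rw [qfi]
  simp only [star_dotProduct_mulVec_eq_apply]
  set W := (of v)ᵀ
  set D := diagonal fun a => (lam a : ℂ)
  set B := Wᴴ * A * W
  have hWW : Wᴴ * W = 1 := conjTranspose_mul_self_eq_one_of_orthonormal hortho
  have hWW' : W * Wᴴ = 1 := mul_eq_one_comm.mp hWW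
  have hB : B.IsHermitian := by
    simp only [B, IsHermitian, conjTranspose_mul, conjTranspose_conjTranspose, hA.eq,
      Matrix.mul_assoc]
  have hDBD : D * B * D = 0 := calc
    D * B * D = (Wᴴ * ρ) * A * (ρ * W) := by
      simp only [B, hdec, ← Matrix.mul_assoc, hWW, Matrix.one_mul]
      simp only [Matrix.mul_assoc, hWW, Matrix.mul_one]
    _ = 0 := by
      rw [← Matrix.mul_assoc, Matrix.mul_assoc Wᴴ, Matrix.mul_assoc Wᴴ, hρAρ]
      simp
  have hBlam : ∀ a b, lam a * lam b * Complex.normSq (B a b) = 0 := by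
    intro a b
    have h := congr_fun₂ hDBD a b
    simp only [D, diagonal_mul, mul_diagonal, Matrix.zero_apply, mul_eq_zero,
      Complex.ofReal_eq_zero] at h
    rcases h with (h | h) | h <;> simp [h]
  have htrace : (ρ * (A * A)).trace = (D * (B * B)).trace := calc
    (ρ * (A * A)).trace = (W * (D * Wᴴ * (A * A))).trace := by
      simp only [hdec, Matrix.mul_assoc]
    _ = (D * Wᴴ * (A * A) * W).trace := trace_mul_comm _ _
    _ = (D * (B * B)).trace := by
      simp only [B, Matrix.mul_assoc]
      rw [← Matrix.mul_assoc W, hWW', Matrix.one_mul]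
  rw [htrace, sum_ite_pos_eq_two_mul_re_trace hlam hB hBlam]
  ring

end Eigenbasis

def zEigenvalue (N : ℕ) (s : Fin N → Fin 2) : ℂ := ∑ i : Fin N, if s i = 0 then 1 else -1

lemma pauliZTotal_eq_diagonal (N : ℕ) : pauliZTotal N = diagonal (zEigenvalue N) := rfl

lemma zEigenvalue_baseStr {N k : ℕ} (hk : k ≤ N) : zEigenvalue N (baseStr N k) = N - 2 * k := by
  obtain ⟨m, rfl⟩ : ∃ m, N = m + k := ⟨N - k, (Nat.sub_add_cancel hk).symm⟩
  have h : ∀ i : Fin (m + k), (if baseStr (m + k) k i = 0 then (1 : ℂ) else -1) =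
      if m ≤ (i : ℕ) then -1 else 1 := fun i => by
    by_cases hi : m ≤ (i : ℕ) <;> simp [baseStr, hi]
  rw [zEigenvalue, Finset.sum_congr rfl fun i _ => h i,
    Fin.sum_univ_eq_sum_range (fun i => if m ≤ i then (-1 : ℂ) else 1), Finset.sum_range_add]
  have hlt : ∀ i ∈ range m, ¬ m ≤ i := fun i hi => by simpa using hi
  simp [Finset.sum_ite_of_false hlt]
  ring

lemma zEigenvalue_flipStr (N k : ℕ) :
    zEigenvalue N (flipStr N k) = -zEigenvalue N (baseStr N k) := by
  rw [zEigenvalue, zEigenvalue, ← Finset.sum_neg_distrib]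
  refine Finset.sum_congr rfl fun i _ => ?_
  by_cases hi : N - k ≤ (i : ℕ) <;> simp [baseStr, flipStr, hi]

lemma baseStr_inj {N j k : ℕ} (hj : j ≤ N) (hk : k ≤ N) : baseStr N j = baseStr N k ↔ j = k := by
  refine ⟨fun h => ?_, congrArg _⟩
  have h := congrArg (zEigenvalue N) h
  rw [zEigenvalue_baseStr hj, zEigenvalue_baseStr hk] at h
  exact_mod_cast (by linear_combination (-1 / 2 : ℂ) * h : (j : ℂ) = k)

lemma flipStr_inj {N j k : ℕ} (hj : j ≤ N) (hk : k ≤ N) : flipStr N j = flipStr N k ↔ j = k := by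
  refine ⟨fun h => ?_, congrArg _⟩
  have h := congrArg (zEigenvalue N) h
  rw [zEigenvalue_flipStr, zEigenvalue_flipStr, zEigenvalue_baseStr hj,
    zEigenvalue_baseStr hk] at h
  exact_mod_cast (by linear_combination (1 / 2 : ℂ) * h : (j : ℂ) = k)

lemma baseStr_ne_flipStr {N j k : ℕ} (hjk : j + k < N) : baseStr N j ≠ flipStr N k := by
  intro h
  have h := congrArg (zEigenvalue N) h
  rw [zEigenvalue_flipStr, zEigenvalue_baseStr (by omega), zEigenvalue_baseStr (by omega)] at h
  have : (N : ℂ) = (j + k : ℕ) := by push_cast; linear_combination (1 / 2 : ℂ) * h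
  exact hjk.ne (by exact_mod_cast this.symm)

lemma psiK_eq (N k : ℕ) : psiK N k =
    ((Real.sqrt 2 : ℂ))⁻¹ • (Pi.single (baseStr N k) 1 + Pi.single (flipStr N k) 1) := by
  ext s
  simp [psiK, Pi.single_apply, div_eq_inv_mul]

lemma star_psiK_dotProduct_diagonal_mulVec_psiK {N j k : ℕ} (hj : j < N / 2) (hk : k < N / 2)
    (d : (Fin N → Fin 2) → ℂ) :
    star (psiK N j) ⬝ᵥ (diagonal d *ᵥ psiK N k) =
      if j = k then (d (baseStr N k) + d (flipStr N k)) / 2 else 0 := by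
  have hbf : ∀ {j k}, j < N / 2 → k < N / 2 → baseStr N j ≠ flipStr N k := fun hj hk =>
    baseStr_ne_flipStr (by omega)
  simp only [psiK_eq, star_smul, star_add, ← Pi.single_star, star_one, mulVec_smul, mulVec_add,
    diagonal_mulVec_single, smul_dotProduct, dotProduct_smul, add_dotProduct, dotProduct_add,
    single_dotProduct, Pi.single_apply, baseStr_inj (by omega : j ≤ N) (by omega : k ≤ N),
    flipStr_inj (by omega : j ≤ N) (by omega : k ≤ N), hbf hj hk, (hbf hk hj).symm, if_false]
  have h2 : ((Real.sqrt 2 : ℂ))⁻¹ ^ 2 = 1 / 2 := by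
    rw [inv_pow, ← Complex.ofReal_pow, Real.sq_sqrt zero_le_two]
    norm_num
  split_ifs
  · simp only [star_inv₀, Complex.star_def, Complex.conj_ofReal, smul_eq_mul]
    linear_combination (d (baseStr N k) + d (flipStr N k)) * h2
  · simp

lemma pauliZTotal_isHermitian (N : ℕ) : (pauliZTotal N).IsHermitian := by
  refine isHermitian_diagonal_of_self_adjoint _ (funext fun s => ?_)
  simp only [Pi.star_apply, star_sum]
  exact Finset.sum_congr rfl fun i _ => by split_ifs <;> simp

lemma rhoN_mul_pauliZTotal_mul_rhoN (N : ℕ) : rhoN N * pauliZTotal N * rhoN N = 0 := by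
  simp only [rhoN, Finset.sum_mul, Finset.mul_sum, Matrix.smul_mul, Matrix.mul_smul,
    vecMulVec_mul, vecMul_vecMulVec]
  refine Finset.sum_eq_zero fun j hj => Finset.sum_eq_zero fun k hk => ?_
  rw [← dotProduct_mulVec, pauliZTotal_eq_diagonal,
    star_psiK_dotProduct_diagonal_mulVec_psiK (mem_range.1 hk) (mem_range.1 hj)]
  simp [zEigenvalue_flipStr]

lemma trace_rhoN_mul_pauliZTotal_sq (N : ℕ) :
    (rhoN N * (pauliZTotal N * pauliZTotal N)).trace =
      ((∑ k ∈ range (N / 2), 2 / (N : ℝ) * ((N : ℝ) - 2 * k) ^ 2 : ℝ) : ℂ) := by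
  simp only [rhoN, Finset.sum_mul, trace_sum, Matrix.smul_mul, trace_smul, vecMulVec_mul,
    trace_vecMulVec]
  push_cast
  refine Finset.sum_congr rfl fun k hk => ?_
  rw [dotProduct_comm, ← dotProduct_mulVec, pauliZTotal_eq_diagonal, diagonal_mul_diagonal,
    star_psiK_dotProduct_diagonal_mulVec_psiK (mem_range.1 hk) (mem_range.1 hk), if_pos rfl,
    zEigenvalue_flipStr, zEigenvalue_baseStr (by simp at hk; omega), smul_eq_mul]
  ring

lemma sum_range_sub_sq (m : ℕ) :
    ∑ k ∈ range m, ((m : ℝ) - k) ^ 2 = m * (m + 1) * (2 * m + 1) / 6 := by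
  induction m with
  | zero => simp
  | succ m ih =>
    rw [Finset.sum_range_succ']
    push_cast
    simp only [add_sub_add_right_eq_sub, ih]
    ring

lemma four_mul_sum_range_half {N : ℕ} (hN : Even N) (hpos : 0 < N) :
    4 * ∑ k ∈ range (N / 2), 2 / (N : ℝ) * ((N : ℝ) - 2 * k) ^ 2 =
      4 / 3 * ((N : ℝ) + 1) * ((N : ℝ) + 2) := by
  obtain ⟨m, rfl⟩ := hN
  have hm : (m : ℝ) ≠ 0 := by norm_cast; omega
  have h : ∀ k : ℕ, 2 / ((m + m : ℕ) : ℝ) * (((m + m : ℕ) : ℝ) - 2 * k) ^ 2 =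
      4 / m * ((m : ℝ) - k) ^ 2 := fun k => by
    push_cast
    field_simp
    ring
  rw [show (m + m) / 2 = m by omega, Finset.sum_congr rfl fun k _ => h k, ← Finset.mul_sum,
    sum_range_sub_sq]
  push_cast
  field_simp
  ring

/-- for even `N > 0`, the quantum Fisher information of `ρ_N` with respect
to `Z = ∑_i σ^z_i` (computed from any spectral decomposition of `ρ_N`) is
`F(ρ_N, Z) = (4/3)(N+1)(N+2)`. -/
theorem qfi_rhoN (N : ℕ) (hN : Even N) (hpos : 0 < N)
    (lam : (Fin N → Fin 2) → ℝ) (v : (Fin N → Fin 2) → (Fin N → Fin 2) → ℂ)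
    (hortho : ∀ a b, star (v a) ⬝ᵥ v b = if a = b then (1 : ℂ) else 0)
    (hlam : ∀ a, 0 ≤ lam a)
    (hdec : rhoN N = ∑ a, (lam a : ℂ) • Matrix.vecMulVec (v a) (star (v a))) :
    qfi lam v (pauliZTotal N) = (4 / 3) * ((N : ℝ) + 1) * ((N : ℝ) + 2) := by
  rw [qfi_eq_four_mul_re_trace_of_mul_mul_eq_zero hortho hlam hdec (pauliZTotal_isHermitian N)
    (rhoN_mul_pauliZTotal_mul_rhoN N), trace_rhoN_mul_pauliZTotal_sq, Complex.ofReal_re,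
    four_mul_sum_range_half hN hpos]
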